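/- The optimal split of points on a line respects order: let x₁ ≤ x₂ ≤ ⋯ ≤ xₙ be real numbers with n ≥ 2. Among all partitions of the multiset {x₁,…,xₙ} into two nonempty parts, there exists a minimizer of φ(A) + φ(B) of the form A = {x₁,…,x_l}, B = {x_{l+1},…,xₙ} for some 1 ≤ l < n. -/
import Mathlib

open Finset

/-- Energy of the sub-multiset of values `x i` for indices `i ∈ A`:
sum of squared deviations from the mean. -/
noncomputable def indexEnergy {n : ℕ} (x : Fin n → ℝ) (A : Finset (Fin n)) : ℝ :=
  ∑ i ∈ A, (x i - (A.card : ℝ)⁻¹ * ∑ j ∈ A, x j) ^ 2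

lemma energy_formula {n : ℕ} (x : Fin n → ℝ) {A : Finset (Fin n)} (hA : A.Nonempty) :
    indexEnergy x A = (∑ i ∈ A, (x i)^2) - (A.card : ℝ)⁻¹ * (∑ i ∈ A, x i)^2 := by
  have hc : (A.card : ℝ) ≠ 0 := Nat.cast_ne_zero.mpr (card_ne_zero.mpr hA)
  rw [indexEnergy]
  simp only [sub_sq, Finset.sum_add_distrib, Finset.sum_sub_distrib, Finset.sum_const,
    nsmul_eq_mul, ← Finset.sum_mul]
  field_simp
  rw [← Finset.mul_sum]
  ring

lemma compl_swap {n : ℕ} {A : Finset (Fin n)} {i j : Fin n} (hi : i ∉ A) (hj : j ∈ A) :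
    (insert i (A.erase j))ᶜ = insert j (Aᶜ.erase i) := by
  have hij : i ≠ j := fun h => hi (h ▸ hj)
  ext k
  simp only [mem_compl, mem_insert, mem_erase, mem_compl]
  by_cases hki : k = i <;> by_cases hkj : k = j <;> simp_all

lemma swap_lemma {n : ℕ} (x : Fin n → ℝ) (A : Finset (Fin n)) (i j : Fin n)
    (hi : i ∉ A) (hj : j ∈ A) (hc : Aᶜ.Nonempty)
    (hd : x i ≤ x j)
    (hμ : (A.card : ℝ)⁻¹ * ∑ k ∈ A, x k ≤ (Aᶜ.card : ℝ)⁻¹ * ∑ k ∈ Aᶜ, x k) :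
    indexEnergy x (insert i (A.erase j)) + indexEnergy x (insert i (A.erase j))ᶜ ≤
        indexEnergy x A + indexEnergy x Aᶜ ∧
      ((insert i (A.erase j)).card : ℝ)⁻¹ * ∑ k ∈ insert i (A.erase j), x k ≤
        ((insert i (A.erase j))ᶜ.card : ℝ)⁻¹ * ∑ k ∈ (insert i (A.erase j))ᶜ, x k := by
  have hij : i ≠ j := fun h => hi (h ▸ hj)
  have hic : i ∈ Aᶜ := mem_compl.mpr hi
  have hjc : j ∉ Aᶜ := by simp [hj]
  set A' := insert i (A.erase j) with hA'
  have hcompl : A'ᶜ = insert j (Aᶜ.erase i) := compl_swap hi hj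
  have hAne : A.Nonempty := ⟨j, hj⟩
  have hA'ne : A'.Nonempty := insert_nonempty _ _
  have hA'cne : A'ᶜ.Nonempty := by rw [hcompl]; exact insert_nonempty _ _
  have hcard : A'.card = A.card := by
    rw [hA', card_insert_of_notMem (fun h => hi (mem_of_mem_erase h)),
      card_erase_of_mem hj]
    exact Nat.succ_pred_eq_of_pos (card_pos.mpr hAne)
  have hcardc : A'ᶜ.card = Aᶜ.card := by
    rw [hcompl, card_insert_of_notMem (fun h => hjc (mem_of_mem_erase h)),
      card_erase_of_mem hic]
    exact Nat.succ_pred_eq_of_pos (card_pos.mpr hc)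
  have hsum : ∀ f : Fin n → ℝ, ∑ k ∈ A', f k = f i + (∑ k ∈ A, f k - f j) := by
    intro f
    rw [hA', sum_insert (fun h => hi (mem_of_mem_erase h)), sum_erase_eq_sub hj]
  have hsumc : ∀ f : Fin n → ℝ, ∑ k ∈ A'ᶜ, f k = f j + (∑ k ∈ Aᶜ, f k - f i) := by
    intro f
    rw [hcompl, sum_insert (fun h => hjc (mem_of_mem_erase h)), sum_erase_eq_sub hic]
  have hp : (0:ℝ) < (A.card : ℝ) := by exact_mod_cast card_pos.mpr hAne
  have hq : (0:ℝ) < (Aᶜ.card : ℝ) := by exact_mod_cast card_pos.mpr hc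
  have hp' : (0:ℝ) < (A.card : ℝ)⁻¹ := by positivity
  have hq' : (0:ℝ) < (Aᶜ.card : ℝ)⁻¹ := by positivity
  set SA := ∑ k ∈ A, x k
  set SB := ∑ k ∈ Aᶜ, x k
  constructor
  · rw [energy_formula x hAne, energy_formula x hc, energy_formula x hA'ne,
      energy_formula x hA'cne, hcard, hcardc, hsum (fun k => (x k)^2),
      hsumc (fun k => (x k)^2), hsum x, hsumc x]
    have key : (A.card:ℝ)⁻¹ * (x i + (SA - x j))^2 + (Aᶜ.card:ℝ)⁻¹ * (x j + (SB - x i))^2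
        ≥ (A.card:ℝ)⁻¹ * SA^2 + (Aᶜ.card:ℝ)⁻¹ * SB^2 - 0 := by
      nlinarith [mul_nonneg (sub_nonneg.mpr hd) (sub_nonneg.mpr hμ), sq_nonneg (x j - x i),
        mul_nonneg (le_of_lt hp') (sq_nonneg (x j - x i)),
        mul_nonneg (le_of_lt hq') (sq_nonneg (x j - x i))]
    linarith
  · rw [hcard, hcardc, hsum x, hsumc x]
    have h1 : (A.card:ℝ)⁻¹ * (x i + (SA - x j)) ≤ (A.card:ℝ)⁻¹ * SA := by
      apply mul_le_mul_of_nonneg_left _ (le_of_lt hp'); linarith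
    have h2 : (Aᶜ.card:ℝ)⁻¹ * SB ≤ (Aᶜ.card:ℝ)⁻¹ * (x j + (SB - x i)) := by
      apply mul_le_mul_of_nonneg_left _ (le_of_lt hq'); linarith
    linarith

lemma prefix_of_closed {n : ℕ} {A : Finset (Fin n)}
    (h : ∀ i j : Fin n, i < j → j ∈ A → i ∈ A) :
    A = Finset.univ.filter (fun i : Fin n => (i : ℕ) < A.card) := by
  ext k
  simp only [mem_filter, mem_univ, true_and]
  constructor
  · intro hk
    have hsub : Finset.Iic k ⊆ A := by
      intro m hm
      rcases lt_or_eq_of_le (mem_Iic.mp hm) with h' | h'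
      · exact h m k h' hk
      · exact h' ▸ hk
    have := card_le_card hsub
    rw [Fin.card_Iic] at this
    omega
  · intro hk
    by_contra hkA
    have hsub : A ⊆ Finset.Iio k := by
      intro m hm
      rw [mem_Iio]
      by_contra hmk
      push_neg at hmk
      rcases lt_or_eq_of_le hmk with h' | h'
      · exact hkA (h k m h' hm)
      · exact hkA (h' ▸ hm)
    have := card_le_card hsub
    rw [Fin.card_Iio] at this
    omega

/-- Optimal two-cluster split of sorted reals respects the order: some prefix
split `{x₁,…,x_l} / {x_{l+1},…,xₙ}` minimizes the two-cluster energy among all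
partitions into two nonempty parts. -/
theorem optimal_split_is_contiguous {n : ℕ} (hn : 2 ≤ n)
    (x : Fin n → ℝ) (hmono : Monotone x) :
    ∃ l : ℕ, 1 ≤ l ∧ l < n ∧
      ∀ A : Finset (Fin n), A.Nonempty → Aᶜ.Nonempty →
        indexEnergy x (Finset.univ.filter (fun i : Fin n => (i : ℕ) < l)) +
          indexEnergy x (Finset.univ.filter (fun i : Fin n => ¬ (i : ℕ) < l)) ≤
        indexEnergy x A + indexEnergy x Aᶜ := by
  classical
  set g : Finset (Fin n) → ℝ := fun A => indexEnergy x A + indexEnergy x Aᶜ with hg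
  set μ : Finset (Fin n) → ℝ := fun A => (A.card : ℝ)⁻¹ * ∑ k ∈ A, x k with hμdef
  set S' : Finset (Finset (Fin n)) :=
    Finset.univ.filter (fun A => A.Nonempty ∧ Aᶜ.Nonempty ∧ μ A ≤ μ Aᶜ) with hS'
  have h0 : (0:ℕ) < n := by omega
  have hS'ne : S'.Nonempty := by
    set B0 : Finset (Fin n) := {⟨0, h0⟩} with hB0
    have hB0ne : B0.Nonempty := singleton_nonempty _
    have hB0c : B0ᶜ.Nonempty := by
      rw [← card_pos, card_compl, hB0, card_singleton, Fintype.card_fin]; omega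
    rcases le_total (μ B0) (μ B0ᶜ) with h | h
    · exact ⟨B0, by simp only [hS', mem_filter, mem_univ, true_and]; exact ⟨hB0ne, hB0c, h⟩⟩
    · refine ⟨B0ᶜ, ?_⟩
      simp only [hS', mem_filter, mem_univ, true_and, compl_compl]
      exact ⟨hB0c, hB0ne, h⟩
  obtain ⟨A₀, hA₀S, hA₀min⟩ := S'.exists_min_image g hS'ne
  set T := S'.filter (fun A => g A ≤ g A₀) with hT
  have hTne : T.Nonempty := ⟨A₀, by simp [hT, hA₀S]⟩
  obtain ⟨A, hAT, hAmin⟩ := T.exists_min_image (fun A => ∑ i ∈ A, (i : ℕ)) hTne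
  rw [hT, mem_filter] at hAT
  obtain ⟨hAS, hAg⟩ := hAT
  rw [hS', mem_filter] at hAS
  obtain ⟨-, hAne, hAcne, hAμ⟩ := hAS
  have gmin : ∀ B ∈ S', g A ≤ g B := fun B hB => le_trans hAg (hA₀min B hB)
  -- A is a prefix
  have hprefix : A = Finset.univ.filter (fun i : Fin n => (i : ℕ) < A.card) := by
    by_cases hex : ∃ i j : Fin n, i ∉ A ∧ j ∈ A ∧ i < j
    · exfalso
      obtain ⟨i, j, hi, hj, hij⟩ := hex
      have hd : x i ≤ x j := hmono (le_of_lt hij)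
      obtain ⟨hgle, hμ'⟩ := swap_lemma x A i j hi hj hAcne hd hAμ
      set A' := insert i (A.erase j) with hA'
      have hA'ne : A'.Nonempty := insert_nonempty _ _
      have hA'cne : A'ᶜ.Nonempty := by
        rw [compl_swap hi hj]; exact insert_nonempty _ _
      have hA'S : A' ∈ S' := by
        rw [hS', mem_filter]
        exact ⟨mem_univ _, hA'ne, hA'cne, hμ'⟩
      have hA'T : A' ∈ T := by
        rw [hT, mem_filter]
        exact ⟨hA'S, le_trans hgle hAg⟩
      have hkey := hAmin A' hA'T
      have hie : i ∉ A.erase j := fun h => hi (mem_of_mem_erase h)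
      have hsum1 : ∑ k ∈ A', (k : ℕ) = (i : ℕ) + ∑ k ∈ A.erase j, (k : ℕ) :=
        sum_insert hie
      have hsum2 : ∑ k ∈ A.erase j, (k : ℕ) + (j : ℕ) = ∑ k ∈ A, (k : ℕ) :=
        sum_erase_add A _ hj
      have hijn : (i : ℕ) < (j : ℕ) := hij
      omega
    · push_neg at hex
      exact prefix_of_closed (fun i j hij hj => by
        by_contra hi; exact absurd hij (not_lt.mpr (hex i j hi hj)))
  refine ⟨A.card, card_pos.mpr hAne, ?_, ?_⟩
  · have : A ≠ Finset.univ := by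
      intro h
      rw [h, compl_univ] at hAcne
      exact not_nonempty_empty hAcne
    have := Finset.card_lt_card (lt_of_le_of_ne (subset_univ A) this)
    rwa [Finset.card_univ, Fintype.card_fin] at this
  · intro B hBne hBcne
    have hfilt : Finset.univ.filter (fun i : Fin n => ¬ (i : ℕ) < A.card) =
        (Finset.univ.filter (fun i : Fin n => (i : ℕ) < A.card))ᶜ := by
      rw [Finset.filter_not, Finset.compl_eq_univ_sdiff]
    rw [hfilt, ← hprefix]
    rcases le_total (μ B) (μ Bᶜ) with h | h
    · exact gmin B (by rw [hS', mem_filter]; exact ⟨mem_univ _, hBne, hBcne, h⟩)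
    · have hBc : Bᶜ ∈ S' := by
        rw [hS', mem_filter]
        refine ⟨mem_univ _, hBcne, ?_, ?_⟩
        · rwa [compl_compl]
        · rwa [compl_compl]
      have h2 := gmin Bᶜ hBc
      simp only [hg, compl_compl] at h2
      linarith
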